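/- arXiv:1207.0111 — 3 statements merged into one kernel-verified Lean document; each statement's English description precedes it below -/
import Mathlib

section
/- Let a₁ < a₂ < … < a_N be positive integers and w₁, …, w_N strictly positive real numbers. Let g_k be the coefficient of z^k in the power series expansion of 1 / (1 - ∑_{i=1}^N w_i z^{a_i}). Then for every natural number k, g_k ≠ 0 if and only if k belongs to the numerical semigroup S = ⟨a₁, …, a_N⟩ = { ∑ n_i a_i : n_i ∈ ℕ }. -/
/-!
Put `F = (1 - f)⁻¹` with `f = ∑ wᵢ z^{aᵢ}`. Then `F = 1 + f F`, so for `k > 0` the coefficient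
`F_k` is the sum of the products `f_i F_j` over `i + j = k`, in which only `j < k` contribute.
Since the coefficients of `f` are nonnegative, induction on `k` shows that `F_k ≥ 0`, and that
`F_k > 0` exactly when `k = i + j` with `f_i > 0` and `F_j > 0`, i.e. when `k` lies in the
additive monoid generated by the exponents `aᵢ`.
-/

open PowerSeries Finset

namespace PowerSeries

variable {R : Type*} [Field R]

theorem inv_one_sub_eq_one_add_mul (f : R⟦X⟧) (hf : constantCoeff f = 0) :
    (1 - f)⁻¹ = 1 + f * (1 - f)⁻¹ := by
  have hinv : (1 - f) * (1 - f)⁻¹ = 1 := PowerSeries.mul_inv_cancel _ (by simp [hf])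
  linear_combination hinv

theorem coeff_inv_one_sub_of_ne_zero (f : R⟦X⟧) (hf : constantCoeff f = 0) {k : ℕ}
    (hk : k ≠ 0) :
    coeff k (1 - f)⁻¹ = ∑ p ∈ antidiagonal k, coeff p.1 f * coeff p.2 (1 - f)⁻¹ := by
  conv_lhs => rw [inv_one_sub_eq_one_add_mul f hf]
  rw [map_add, coeff_one, if_neg hk, zero_add, coeff_mul]

variable [LinearOrder R] [IsStrictOrderedRing R]

theorem coeff_inv_one_sub_nonneg (f : R⟦X⟧) (hf : constantCoeff f = 0)
    (hf_nonneg : ∀ n, 0 ≤ coeff n f) (k : ℕ) : 0 ≤ coeff k (1 - f)⁻¹ := by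
  induction k using Nat.strong_induction_on with
  | _ k ih =>
    rcases eq_or_ne k 0 with rfl | hk
    · simp [hf]
    rw [coeff_inv_one_sub_of_ne_zero f hf hk]
    refine sum_nonneg fun p hp => ?_
    rw [HasAntidiagonal.mem_antidiagonal] at hp
    rcases eq_or_ne p.1 0 with h1 | h1
    · simp [h1, hf]
    · exact mul_nonneg (hf_nonneg _) (ih _ (by omega))

theorem coeff_inv_one_sub_pos_iff (f : R⟦X⟧) (hf : constantCoeff f = 0)
    (hf_nonneg : ∀ n, 0 ≤ coeff n f) (k : ℕ) :
    0 < coeff k (1 - f)⁻¹ ↔ k ∈ AddSubmonoid.closure {n | 0 < coeff n f} := by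
  have hF_nonneg := coeff_inv_one_sub_nonneg f hf hf_nonneg
  constructor
  · induction k using Nat.strong_induction_on with
    | _ k ih =>
      intro hpos
      rcases eq_or_ne k 0 with rfl | hk
      · exact zero_mem _
      rw [coeff_inv_one_sub_of_ne_zero f hf hk] at hpos
      obtain ⟨⟨i, j⟩, hij, hprod⟩ := exists_ne_zero_of_sum_ne_zero hpos.ne'
      rw [HasAntidiagonal.mem_antidiagonal] at hij
      obtain ⟨hfi, hFj⟩ := mul_ne_zero_iff.mp hprod
      have hi : i ≠ 0 := by rintro rfl; simp [hf] at hfi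
      rw [← hij]
      exact add_mem (AddSubmonoid.subset_closure ((hf_nonneg i).lt_of_ne' hfi))
        (ih j (by omega) ((hF_nonneg j).lt_of_ne' hFj))
  · intro hk
    induction hk using AddSubmonoid.closure_induction_left with
    | zero => simp [hf]
    | add_left i hfi j _ ih =>
      have hi : i ≠ 0 := by rintro rfl; simp [hf] at hfi
      rw [coeff_inv_one_sub_of_ne_zero f hf (by omega)]
      refine lt_of_lt_of_le (mul_pos hfi ih) ?_
      exact single_le_sum (fun p _ => mul_nonneg (hf_nonneg p.1) (hF_nonneg p.2))
        (HasAntidiagonal.mem_antidiagonal.mpr rfl : (i, j) ∈ antidiagonal (i + j))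

end PowerSeries

section WeightedMonomials

variable {ι R : Type*} [Fintype ι] [Semiring R]

theorem coeff_sum_C_mul_X_pow (a : ι → ℕ) (w : ι → R) (n : ℕ) :
    coeff n (∑ i, C (w i) * X ^ a i) = ∑ i, if n = a i then w i else 0 := by
  simp only [map_sum, coeff_C_mul_X_pow]

theorem constantCoeff_sum_C_mul_X_pow {a : ι → ℕ} (ha : ∀ i, 0 < a i) (w : ι → R) :
    constantCoeff (∑ i, C (w i) * X ^ a i) = 0 := by
  rw [← coeff_zero_eq_constantCoeff_apply, coeff_sum_C_mul_X_pow]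
  exact sum_eq_zero fun i _ => if_neg (ha i).ne

theorem coeff_sum_C_mul_X_pow_nonneg [PartialOrder R] [IsOrderedRing R] (a : ι → ℕ)
    {w : ι → R} (hw : ∀ i, 0 ≤ w i) (n : ℕ) :
    0 ≤ coeff n (∑ i, C (w i) * X ^ a i) := by
  rw [coeff_sum_C_mul_X_pow]
  exact sum_nonneg fun i _ => by split_ifs <;> simp [hw i]

theorem setOf_coeff_sum_C_mul_X_pow_pos [PartialOrder R] [IsOrderedRing R] (a : ι → ℕ)
    {w : ι → R} (hw : ∀ i, 0 < w i) :
    {n | 0 < coeff n (∑ i, C (w i) * X ^ a i)} = Set.range a := by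
  ext n
  simp only [Set.mem_ofPred_eq, Set.mem_range, coeff_sum_C_mul_X_pow]
  constructor
  · intro hpos
    obtain ⟨i, -, hi⟩ := exists_ne_zero_of_sum_ne_zero hpos.ne'
    exact ⟨i, (ite_ne_right_iff.mp hi).1.symm⟩
  · rintro ⟨i, rfl⟩
    refine lt_of_lt_of_le (by simpa using hw i) (single_le_sum (a := i) ?_ (mem_univ i))
    exact fun j _ => by split_ifs <;> simp [(hw j).le]

end WeightedMonomials

theorem stmt_1_general (N : ℕ) (a : Fin (N + 1) → ℕ) (w : Fin (N + 1) → ℝ)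
    (hapos : ∀ i, 0 < a i) (hw : ∀ i, 0 < w i)
    (g : ℕ → ℝ)
    (hg : ∀ k, g k = PowerSeries.coeff (R := ℝ) k
      (1 - ∑ i, PowerSeries.C (R := ℝ) (w i) * PowerSeries.X ^ a i)⁻¹) :
    ∀ k : ℕ, g k ≠ 0 ↔ ∃ n : Fin (N + 1) → ℕ, k = ∑ i, n i * a i := by
  intro k
  set f : ℝ⟦X⟧ := ∑ i, C (w i) * X ^ a i
  have hf : constantCoeff f = 0 := constantCoeff_sum_C_mul_X_pow hapos w
  have hf_nonneg := coeff_sum_C_mul_X_pow_nonneg a fun i => (hw i).le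
  rw [hg, ← (coeff_inv_one_sub_nonneg f hf hf_nonneg k).lt_iff_ne',
    coeff_inv_one_sub_pos_iff f hf hf_nonneg, setOf_coeff_sum_C_mul_X_pow_pos a hw,
    AddSubmonoid.mem_closure_range_iff_of_fintype]
  simp only [smul_eq_mul]

theorem stmt_1 (N : ℕ) (a : Fin (N + 1) → ℕ) (w : Fin (N + 1) → ℝ)
    (ha : StrictMono a) (hapos : ∀ i, 0 < a i) (hw : ∀ i, 0 < w i)
    (g : ℕ → ℝ)
    (hg : ∀ k, g k = PowerSeries.coeff (R := ℝ) k
      (1 - ∑ i, PowerSeries.C (R := ℝ) (w i) * PowerSeries.X ^ a i)⁻¹) :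
    ∀ k : ℕ, g k ≠ 0 ↔ ∃ n : Fin (N + 1) → ℕ, k = ∑ i, n i * a i :=
  stmt_1_general N a w hapos hw g hg
end

section
/- Let a₁ < … < a_N be positive integers with gcd(a₁, …, a_N) = 1 and let I ⊆ ℕ \ ⟨a₁, …, a_N⟩. Then there exists K ∈ ℕ such that for all β > K there exists a linear recurrence of order exactly β with a non-trivial solution vanishing on all of I. -/
/-!
All sufficiently large integers are ℕ-combinations of the `a i` (Frobenius), so `I` is bounded,
and `0 ∉ I`. Hence for large `β` every element of `I` lies strictly between `0` and `β`, and the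
`β`-periodic indicator of the multiples of `β` solves `g k = g (k - β)` and vanishes on `I`.
-/

theorem Nat.exists_forall_ge_eq_sum_mul_of_gcd_eq_one {ι : Type*} [Fintype ι] (a : ι → ℕ)
    (hgcd : Finset.univ.gcd a = 1) :
    ∃ K, ∀ k ≥ K, ∃ n : ι → ℕ, k = ∑ i, n i * a i := by
  have hsetGcd : Nat.setGcd (Set.range a) ∣ 1 :=
    hgcd ▸ Finset.dvd_gcd fun i _ ↦ Nat.setGcd_dvd_of_mem (Set.mem_range_self i)
  obtain ⟨K, hK⟩ := Nat.exists_mem_closure_of_ge (Set.range a)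
  refine ⟨K, fun k hk ↦ ?_⟩
  obtain ⟨n, hn⟩ := AddSubmonoid.exists_of_mem_closure_range a k
    (hK k hk (hsetGcd.trans (one_dvd k)))
  exact ⟨n, by simpa only [smul_eq_mul] using hn⟩

theorem exists_recurrence_solution_vanishing_of_not_dvd {β : ℕ} (hβ : 0 < β) {I : Set ℕ}
    (hI : ∀ k ∈ I, ¬ β ∣ k) :
    ∃ (α : ℕ → ℂ) (g : ℕ → ℂ),
      α β ≠ 0 ∧
      (∃ k, g k ≠ 0) ∧
      (∀ k, β ≤ k → g k + ∑ i ∈ Finset.Icc 1 β, α i * g (k - i) = 0) ∧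
      (∀ k ∈ I, g k = 0) := by
  refine ⟨fun i ↦ if i = β then -1 else 0, fun k ↦ if β ∣ k then 1 else 0,
    by simp, ⟨0, by simp⟩, fun k hk ↦ ?_, fun k hk ↦ if_neg (hI k hk)⟩
  rw [Finset.sum_eq_single_of_mem β (Finset.mem_Icc.2 ⟨hβ, le_rfl⟩) fun i _ hi ↦ by simp [hi]]
  have hperiodic : β ∣ k - β ↔ β ∣ k := Nat.dvd_sub_iff_left hk dvd_rfl
  by_cases hdvd : β ∣ k <;> simp [hdvd, hperiodic]

theorem stmt_9_general (N : ℕ) (a : Fin (N + 1) → ℕ)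
    (hgcd : Finset.univ.gcd a = 1)
    (I : Set ℕ)
    (hI : I ⊆ {k : ℕ | ¬ ∃ n : Fin (N + 1) → ℕ, k = ∑ i, n i * a i}) :
    ∃ K : ℕ, ∀ β : ℕ, K < β →
      ∃ (α : ℕ → ℂ) (g : ℕ → ℂ),
        α β ≠ 0 ∧
        (∃ k, g k ≠ 0) ∧
        (∀ k, β ≤ k → g k + ∑ i ∈ Finset.Icc 1 β, α i * g (k - i) = 0) ∧
        (∀ k ∈ I, g k = 0) := by
  obtain ⟨K, hK⟩ := Nat.exists_forall_ge_eq_sum_mul_of_gcd_eq_one a hgcd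
  have hI_lt : ∀ k ∈ I, k < K := fun k hk ↦ not_le.1 fun hle ↦ hI hk (hK k hle)
  have hI_pos : ∀ k ∈ I, 0 < k :=
    fun k hk ↦ Nat.pos_of_ne_zero fun h0 ↦ hI hk ⟨0, by simp [h0]⟩
  exact ⟨K, fun β hβ ↦ exists_recurrence_solution_vanishing_of_not_dvd (by omega)
    fun k hk ↦ Nat.not_dvd_of_pos_of_lt (hI_pos k hk) ((hI_lt k hk).trans hβ)⟩

theorem stmt_9 (N : ℕ) (a : Fin (N + 1) → ℕ)
    (ha : StrictMono a) (hapos : ∀ i, 0 < a i)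
    (hgcd : Finset.univ.gcd a = 1)
    (I : Set ℕ)
    (hI : I ⊆ {k : ℕ | ¬ ∃ n : Fin (N + 1) → ℕ, k = ∑ i, n i * a i}) :
    ∃ K : ℕ, ∀ β : ℕ, K < β →
      ∃ (α : ℕ → ℂ) (g : ℕ → ℂ),
        α β ≠ 0 ∧
        (∃ k, g k ≠ 0) ∧
        (∀ k, β ≤ k → g k + ∑ i ∈ Finset.Icc 1 β, α i * g (k - i) = 0) ∧
        (∀ k ∈ I, g k = 0) :=
  stmt_9_general N a hgcd I hI
end

section
/- Let a₁ < … < a_N be positive integers and w₁, …, w_N strictly positive reals. Define the sequence g by g₀ = 1, g_j = 0 for the a_N − 1 'negative' initial positions (i.e., extend g by zero to negative indices), and g_k = ∑_{i=1}^N w_i g_{k-a_i} for k > 0. Then the set {k ∈ ℕ : g_k = 0} equals exactly the set of gaps of the numerical semigroup ⟨a₁, …, a_N⟩. -/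
/-!
The weights are positive, so by strong induction `g` is nonnegative on `ℕ`, and for `k > 0` the
recurrence shows `g k > 0` iff `g (k - a i) > 0` for some `a i ≤ k`. A positive integer lies in
the semigroup generated by the `a i` iff subtracting some generator leaves an element of it, so
positivity of `g` and membership in the semigroup obey the same recursion from `k = 0`.
-/

lemma sum_add_single_one_mul {ι : Type*} [Fintype ι] [DecidableEq ι] (n a : ι → ℕ) (i : ι) :
    ∑ j, (n + Pi.single i 1 : ι → ℕ) j * a j = ∑ j, n j * a j + a i := by
  simp [add_mul, Finset.sum_add_distrib, Pi.single_apply, ite_mul]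

def Representable {ι : Type*} [Fintype ι] (a : ι → ℕ) (k : ℕ) : Prop :=
  ∃ n : ι → ℕ, k = ∑ i, n i * a i

namespace Representable

variable {ι : Type*} [Fintype ι] {a : ι → ℕ} {k : ℕ}

theorem zero : Representable a 0 := ⟨0, by simp⟩

theorem iff_exists_sub (hk : 0 < k) :
    Representable a k ↔ ∃ i, a i ≤ k ∧ Representable a (k - a i) := by
  classical
  constructor
  · rintro ⟨n, rfl⟩
    obtain ⟨i, -, hi⟩ := Finset.sum_pos_iff.mp hk
    have hni : n - Pi.single i 1 + Pi.single i 1 = n := by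
      funext j
      by_cases hj : j = i
      · subst hj
        simp only [Pi.add_apply, Pi.sub_apply, Pi.single_eq_same]
        have := Nat.pos_of_mul_pos_right hi
        omega
      · simp [hj]
    have hsum := sum_add_single_one_mul (n - Pi.single i 1) a i
    rw [hni] at hsum
    exact ⟨i, by omega, n - Pi.single i 1, by omega⟩
  · rintro ⟨i, hik, n, hn⟩
    exact ⟨n + Pi.single i 1, by rw [sum_add_single_one_mul]; omega⟩

end Representable

section Recurrence

variable {ι : Type*} [Fintype ι] {a : ι → ℕ} {w : ι → ℝ} {g : ℤ → ℝ}

lemma apply_natCast_sub_natCast_of_neg_eq_zero (hneg : ∀ j : ℤ, j < 0 → g j = 0) (n m : ℕ) :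
    g ((n : ℤ) - m) = if m ≤ n then g (n - m : ℕ) else 0 := by
  split_ifs with h
  · rw [Nat.cast_sub h]
  · exact hneg _ (by omega)

lemma eq_sum_of_recurrence (hneg : ∀ j : ℤ, j < 0 → g j = 0)
    (hrec : ∀ k : ℤ, 1 ≤ k → g k = ∑ i, w i * g (k - (a i : ℤ))) {n : ℕ} (hn : 0 < n) :
    g n = ∑ i, w i * if a i ≤ n then g (n - a i : ℕ) else 0 := by
  simp only [hrec n (by omega), apply_natCast_sub_natCast_of_neg_eq_zero hneg]

variable (hapos : ∀ i, 0 < a i) (hw : ∀ i, 0 < w i) (hneg : ∀ j : ℤ, j < 0 → g j = 0)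
  (h0 : g 0 = 1) (hrec : ∀ k : ℤ, 1 ≤ k → g k = ∑ i, w i * g (k - (a i : ℤ)))
include hapos hw hneg h0 hrec

lemma nonneg_of_recurrence (n : ℕ) : 0 ≤ g n := by
  induction n using Nat.strong_induction_on with
  | _ n ih =>
    rcases Nat.eq_zero_or_pos n with rfl | hn
    · simp [h0]
    rw [eq_sum_of_recurrence hneg hrec hn]
    exact Finset.sum_nonneg fun i _ =>
      mul_nonneg (hw i).le (ite_nonneg (ih _ (Nat.sub_lt hn (hapos i))) le_rfl)

lemma pos_iff_representable_of_recurrence (n : ℕ) : 0 < g n ↔ Representable a n := by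
  induction n using Nat.strong_induction_on with
  | _ n ih =>
    rcases Nat.eq_zero_or_pos n with rfl | hn
    · simp [h0, Representable.zero]
    have hterm_nonneg : ∀ i ∈ Finset.univ, 0 ≤ w i * if a i ≤ n then g (n - a i : ℕ) else 0 :=
      fun i _ => mul_nonneg (hw i).le
        (ite_nonneg (nonneg_of_recurrence hapos hw hneg h0 hrec _) le_rfl)
    rw [eq_sum_of_recurrence hneg hrec hn, Finset.sum_pos_iff_of_nonneg hterm_nonneg,
      Representable.iff_exists_sub hn]
    refine exists_congr fun i => ?_
    simp only [Finset.mem_univ, true_and, mul_pos_iff_of_pos_left (hw i)]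
    split_ifs with hi
    · rw [ih _ (Nat.sub_lt hn (hapos i)), and_iff_right hi]
    · simp [hi]

end Recurrence

theorem stmt_10_general (N : ℕ) (a : Fin (N + 1) → ℕ) (w : Fin (N + 1) → ℝ)
    (hapos : ∀ i, 0 < a i) (hw : ∀ i, 0 < w i)
    (g : ℤ → ℝ)
    (hneg : ∀ j : ℤ, j < 0 → g j = 0)
    (h0 : g 0 = 1)
    (hrec : ∀ k : ℤ, 1 ≤ k → g k = ∑ i, w i * g (k - (a i : ℤ))) :
    {k : ℕ | g (k : ℤ) = 0} =
      {k : ℕ | ¬ ∃ n : Fin (N + 1) → ℕ, k = ∑ i, n i * a i} := by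
  refine Set.ext fun k => ?_
  change g k = 0 ↔ ¬ Representable a k
  rw [← pos_iff_representable_of_recurrence hapos hw hneg h0 hrec,
    (nonneg_of_recurrence hapos hw hneg h0 hrec k).lt_iff_ne', not_ne_iff]

theorem stmt_10 (N : ℕ) (a : Fin (N + 1) → ℕ) (w : Fin (N + 1) → ℝ)
    (ha : StrictMono a) (hapos : ∀ i, 0 < a i) (hw : ∀ i, 0 < w i)
    (g : ℤ → ℝ)
    (hneg : ∀ j : ℤ, j < 0 → g j = 0)
    (h0 : g 0 = 1)
    (hrec : ∀ k : ℤ, 1 ≤ k → g k = ∑ i, w i * g (k - (a i : ℤ))) :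
    {k : ℕ | g (k : ℤ) = 0} =
      {k : ℕ | ¬ ∃ n : Fin (N + 1) → ℕ, k = ∑ i, n i * a i} :=
  stmt_10_general N a w hapos hw g hneg h0 hrec
end
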